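/- Let b∈ℝ and define polynomials c_k(χ), d_k(χ) (with coefficients depending on b) by c₀=1, d₀=0, c₁=0, d₁=1, and for k≥2 by the recurrences c_k(χ)=−χ·c_{k−1}(χ)+(b+k−2)·c_{k−2}(χ)+χ(k−2)·c_{k−3}(χ) and d_k(χ)=−χ·d_{k−1}(χ)+(b+k−2)·d_{k−2}(χ)+χ(k−2)·d_{k−3}(χ) (terms with negative index interpreted as 0). Then for b>0, every integer k≥0 and every χ∈ℝ, S_k(χ) = c_k(χ)·S₀(χ) + d_k(χ)·S₁(χ). -/

import Mathlib

/-
Differentiating `τ ^ b * (τ - χ) ^ k * exp (-(τ - χ) ^ 2 / 2)` and writing `τ = (τ - χ) + χ`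
expresses the derivative through the integrands of `S_{k+2}, S_{k+1}, S_k, S_{k-1}`. Its integral
over `(0, ∞)` vanishes, since the function is integrable there (so it tends to `0` at infinity) and
vanishes at `0` for `b > 0`. This gives the three-term recurrence
`S_{k+2} = -χ S_{k+1} + (b + k) S_k + χ k S_{k-1}`, which `c_k` and `d_k` also satisfy; they
start from the unit vectors, so induction gives `S_k = c_k S_0 + d_k S_1`.
-/

open MeasureTheory Real

/-- The canonical integrals `S_k(χ) = (1/Γ(b)) ∫₀^∞ τ^{b-1} (τ-χ)^k e^{-(τ-χ)²/2} dτ`. -/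
noncomputable def S (b : ℝ) (k : ℕ) (χ : ℝ) : ℝ :=
  (1 / Real.Gamma b) *
    ∫ τ in Set.Ioi (0 : ℝ), τ ^ (b - 1) * (τ - χ) ^ k * Real.exp (-(τ - χ) ^ 2 / 2)

/-- The connection coefficients `c_k(χ)`: `c₀ = 1`, `c₁ = 0`, and for `k ≥ 2`
`c_k(χ) = -χ c_{k-1}(χ) + (b + k - 2) c_{k-2}(χ) + χ (k-2) c_{k-3}(χ)`
(terms with negative index interpreted as `0`). -/
noncomputable def ccoef (b : ℝ) : ℕ → ℝ → ℝ
  | 0 => fun _ => 1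
  | 1 => fun _ => 0
  | 2 => fun χ => -χ * ccoef b 1 χ + b * ccoef b 0 χ
  | (k + 3) => fun χ =>
      -χ * ccoef b (k + 2) χ + (b + (k + 3) - 2) * ccoef b (k + 1) χ
        + χ * ((k + 3 : ℝ) - 2) * ccoef b k χ

/-- The connection coefficients `d_k(χ)`: `d₀ = 0`, `d₁ = 1`, and for `k ≥ 2`
`d_k(χ) = -χ d_{k-1}(χ) + (b + k - 2) d_{k-2}(χ) + χ (k-2) d_{k-3}(χ)`
(terms with negative index interpreted as `0`). -/
noncomputable def dcoef (b : ℝ) : ℕ → ℝ → ℝ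
  | 0 => fun _ => 0
  | 1 => fun _ => 1
  | 2 => fun χ => -χ * dcoef b 1 χ + b * dcoef b 0 χ
  | (k + 3) => fun χ =>
      -χ * dcoef b (k + 2) χ + (b + (k + 3) - 2) * dcoef b (k + 1) χ
        + χ * ((k + 3 : ℝ) - 2) * dcoef b k χ

open Set Filter Topology

noncomputable def momentIntegrand (s χ : ℝ) (k : ℕ) (τ : ℝ) : ℝ :=
  τ ^ s * (τ - χ) ^ k * exp (-(τ - χ) ^ 2 / 2)

theorem S_eq_integral_momentIntegrand (b : ℝ) (k : ℕ) (χ : ℝ) :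
    S b k χ = (1 / Gamma b) * ∫ τ in Ioi 0, momentIntegrand (b - 1) χ k τ := rfl

theorem abs_pow_mul_exp_neg_sq_le (k : ℕ) (x : ℝ) :
    |x| ^ k * exp (-x ^ 2 / 4) ≤ k.factorial * exp 1 := by
  have hpow : |x| ^ k ≤ k.factorial * exp |x| := by
    have := pow_div_factorial_le_exp |x| (abs_nonneg x) k
    rwa [div_le_iff₀' (by positivity)] at this
  calc |x| ^ k * exp (-x ^ 2 / 4) ≤ k.factorial * exp |x| * exp (-x ^ 2 / 4) := by gcongr
    _ = k.factorial * exp (|x| - x ^ 2 / 4) := by rw [mul_assoc, ← exp_add]; ring_nf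
    _ ≤ k.factorial * exp 1 := by
      gcongr
      nlinarith [sq_abs x, sq_nonneg (|x| - 2)]

theorem abs_sub_pow_mul_exp_le (k : ℕ) (χ τ : ℝ) :
    |τ - χ| ^ k * exp (-(τ - χ) ^ 2 / 2) ≤
      k.factorial * exp 1 * exp (χ ^ 2 / 4) * exp (-(1 / 8) * τ ^ 2) := by
  have hshift : exp (-(τ - χ) ^ 2 / 4) ≤ exp (χ ^ 2 / 4) * exp (-(1 / 8) * τ ^ 2) := by
    rw [← exp_add]
    exact exp_le_exp.mpr (by nlinarith [sq_nonneg (τ - 2 * χ)])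
  calc |τ - χ| ^ k * exp (-(τ - χ) ^ 2 / 2)
      = (|τ - χ| ^ k * exp (-(τ - χ) ^ 2 / 4)) * exp (-(τ - χ) ^ 2 / 4) := by
        rw [mul_assoc, ← exp_add]; ring_nf
    _ ≤ (k.factorial * exp 1) * (exp (χ ^ 2 / 4) * exp (-(1 / 8) * τ ^ 2)) :=
        mul_le_mul (abs_pow_mul_exp_neg_sq_le k _) hshift (exp_pos _).le (by positivity)
    _ = _ := by ring

theorem integrableOn_momentIntegrand {s : ℝ} (hs : -1 < s) (χ : ℝ) (k : ℕ) :
    IntegrableOn (momentIntegrand s χ k) (Ioi 0) := by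
  refine ((integrableOn_rpow_mul_exp_neg_mul_sq (by norm_num : (0 : ℝ) < 1 / 8) hs).const_mul
    (k.factorial * exp 1 * exp (χ ^ 2 / 4))).mono' ?_ ?_
  · unfold momentIntegrand
    exact Measurable.aestronglyMeasurable (by fun_prop)
  · filter_upwards [self_mem_ae_restrict measurableSet_Ioi] with τ (hτ : 0 < τ)
    have hrpow : 0 ≤ τ ^ s := rpow_nonneg hτ.le s
    rw [momentIntegrand, norm_mul, norm_mul, norm_pow, norm_of_nonneg hrpow,
      norm_of_nonneg (exp_pos _).le, Real.norm_eq_abs]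
    calc τ ^ s * |τ - χ| ^ k * exp (-(τ - χ) ^ 2 / 2)
        = τ ^ s * (|τ - χ| ^ k * exp (-(τ - χ) ^ 2 / 2)) := mul_assoc _ _ _
      _ ≤ τ ^ s * (k.factorial * exp 1 * exp (χ ^ 2 / 4) * exp (-(1 / 8) * τ ^ 2)) :=
        mul_le_mul_of_nonneg_left (abs_sub_pow_mul_exp_le k χ τ) hrpow
      _ = _ := by ring

theorem hasDerivAt_momentIntegrand (b χ : ℝ) (k : ℕ) {τ : ℝ} (hτ : 0 < τ) :
    HasDerivAt (momentIntegrand b χ k)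
      ((b + k) * momentIntegrand (b - 1) χ k τ + χ * k * momentIntegrand (b - 1) χ (k - 1) τ
        - momentIntegrand (b - 1) χ (k + 2) τ - χ * momentIntegrand (b - 1) χ (k + 1) τ) τ := by
  have hrpow : HasDerivAt (fun τ : ℝ => τ ^ b) (b * τ ^ (b - 1)) τ := by
    simpa [mul_comm] using hasDerivAt_rpow_const (p := b) (Or.inl hτ.ne')
  have hpow : HasDerivAt (fun τ : ℝ => (τ - χ) ^ k) (k * (τ - χ) ^ (k - 1)) τ := by
    simpa using ((hasDerivAt_id τ).sub_const χ).fun_pow k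
  have hsq : HasDerivAt (fun τ : ℝ => -(τ - χ) ^ 2 / 2) (-(τ - χ)) τ := by
    refine ((((hasDerivAt_id' τ).sub_const χ).fun_pow 2).fun_neg.div_const 2).congr_deriv ?_
    push_cast; ring
  refine ((hrpow.fun_mul hpow).fun_mul hsq.exp).congr_deriv ?_
  have hτb : τ ^ b = τ ^ (b - 1) * τ := by
    rw [← rpow_add_one hτ.ne']; norm_num
  simp only [momentIntegrand, hτb]
  cases k with
  | zero => simp; ring
  | succ j => simp only [Nat.add_sub_cancel]; push_cast; ring

theorem integral_momentIntegrand_add_two {b : ℝ} (hb : 0 < b) (χ : ℝ) (k : ℕ) :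
    ∫ τ in Ioi 0, momentIntegrand (b - 1) χ (k + 2) τ =
      -χ * (∫ τ in Ioi 0, momentIntegrand (b - 1) χ (k + 1) τ)
        + (b + k) * (∫ τ in Ioi 0, momentIntegrand (b - 1) χ k τ)
        + χ * k * ∫ τ in Ioi 0, momentIntegrand (b - 1) χ (k - 1) τ := by
  have hint (j : ℕ) : IntegrableOn (momentIntegrand (b - 1) χ j) (Ioi 0) :=
    integrableOn_momentIntegrand (by linarith) χ j
  have hderiv (τ : ℝ) (hτ : τ ∈ Ioi 0) := hasDerivAt_momentIntegrand b χ k hτ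
  have h₁ := (hint k).const_mul (b + k)
  have h₂ := (hint (k - 1)).const_mul (χ * k)
  have h₃ := hint (k + 2)
  have h₄ := (hint (k + 1)).const_mul χ
  have hderiv_int := ((h₁.add h₂).sub h₃).sub h₄
  have hlim := tendsto_zero_of_hasDerivAt_of_integrableOn_Ioi hderiv hderiv_int
    (integrableOn_momentIntegrand (by linarith) χ k)
  have hcont : ContinuousWithinAt (momentIntegrand b χ k) (Ici 0) 0 :=
    (((continuousAt_rpow_const 0 b (Or.inr hb.le)).mul (by fun_prop)).mul
      (by fun_prop)).continuousWithinAt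
  have hibp := integral_Ioi_of_hasDerivAt_of_tendsto hcont hderiv hderiv_int hlim
  have hzero : momentIntegrand b χ k 0 = 0 := by simp [momentIntegrand, zero_rpow hb.ne']
  rw [integral_sub, integral_sub, integral_add h₁ h₂, integral_const_mul, integral_const_mul,
    integral_const_mul, hzero] at hibp
  · linarith
  exacts [h₁.add h₂, h₃, (h₁.add h₂).sub h₃, h₄]

-- At `k = 0` the truncated `k - 1` is harmless: its coefficient vanishes.
theorem S_add_two {b : ℝ} (hb : 0 < b) (k : ℕ) (χ : ℝ) :
    S b (k + 2) χ = -χ * S b (k + 1) χ + (b + k) * S b k χ + χ * k * S b (k - 1) χ := by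
  simp only [S_eq_integral_momentIntegrand, integral_momentIntegrand_add_two hb]
  ring

theorem ccoef_add_two (b : ℝ) (k : ℕ) (χ : ℝ) :
    ccoef b (k + 2) χ =
      -χ * ccoef b (k + 1) χ + (b + k) * ccoef b k χ + χ * k * ccoef b (k - 1) χ := by
  cases k with
  | zero => simp [ccoef]
  | succ j => rw [ccoef]; push_cast; ring

theorem dcoef_add_two (b : ℝ) (k : ℕ) (χ : ℝ) :
    dcoef b (k + 2) χ =
      -χ * dcoef b (k + 1) χ + (b + k) * dcoef b k χ + χ * k * dcoef b (k - 1) χ := by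
  cases k with
  | zero => simp [dcoef]
  | succ j => rw [dcoef]; push_cast; ring

theorem eq_ccoef_mul_add_dcoef_mul_of_recurrence {b χ : ℝ} {s : ℕ → ℝ}
    (hs : ∀ k : ℕ, s (k + 2) = -χ * s (k + 1) + (b + k) * s k + χ * k * s (k - 1)) (k : ℕ) :
    s k = ccoef b k χ * s 0 + dcoef b k χ * s 1 := by
  induction k using Nat.strong_induction_on with
  | _ k ih =>
    match k with
    | 0 => simp [ccoef, dcoef]
    | 1 => simp [ccoef, dcoef]
    | k + 2 =>
      rw [hs, ih (k + 1) (by omega), ih k (by omega), ih (k - 1) (by omega), ccoef_add_two,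
        dcoef_add_two]
      ring

/-- `S_k(χ) = c_k(χ) S₀(χ) + d_k(χ) S₁(χ)` for all `k ≥ 0`. -/
theorem S_connection (b : ℝ) (hb : 0 < b) (k : ℕ) (χ : ℝ) :
    S b k χ = ccoef b k χ * S b 0 χ + dcoef b k χ * S b 1 χ :=
  eq_ccoef_mul_add_dcoef_mul_of_recurrence (s := fun k => S b k χ) (fun k => S_add_two hb k χ) k
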